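/- The Takagi function τ restricted to the set (1/2)Ω^L = {x ∈ [0,1] : x has a binary expansion with D_j(x) > 0 for all j ≥ 1} is nondecreasing: if x, x' ∈ (1/2)Ω^L with x ≤ x', then τ(x) ≤ τ(x'). -/

import Mathlib

open Finset

/-- Distance from `t` to the nearest integer. -/
noncomputable def distNearestInt (t : ℝ) : ℝ := ⨅ n : ℤ, |t - (n : ℝ)|

/-- The Takagi function. -/
noncomputable def takagi (x : ℝ) : ℝ := ∑' n : ℕ, distNearestInt (2 ^ n * x) / 2 ^ n

/-- The partial Takagi function of level `n`. -/
noncomputable def takagiPartial (n : ℕ) (x : ℝ) : ℝ :=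
  ∑ j ∈ Finset.range n, distNearestInt (2 ^ j * x) / 2 ^ j

/-- The deficient digit function `D_j` attached to a binary digit sequence `b`
(with `b i` the `(i+1)`-st binary digit): number of 0's minus number of 1's
among the first `j` digits. -/
def defD (b : ℕ → ℕ) (j : ℕ) : ℤ := (j : ℤ) - 2 * ∑ i ∈ Finset.range j, (b i : ℤ)

/-- `x` is the real number with binary expansion `0.b₁b₂b₃…`, `b i` being digit `i+1`. -/
def IsBinaryExpansion (b : ℕ → ℕ) (x : ℝ) : Prop :=
  (∀ i, b i ≤ 1) ∧ x = ∑' i : ℕ, (b i : ℝ) / 2 ^ (i + 1)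

/-- The deficient digit set `Ω^L`. -/
def OmegaL : Set ℝ :=
  {x | ∃ b : ℕ → ℕ, IsBinaryExpansion b x ∧ ∀ j ≥ 1, 0 ≤ defD b j}

/-- The set `(1/2)Ω^L`: reals with a binary expansion whose deficient digit values are
all strictly positive. -/
def halfOmegaL : Set ℝ :=
  {x | ∃ b : ℕ → ℕ, IsBinaryExpansion b x ∧ ∀ j ≥ 1, 0 < defD b j}

open Filter

lemma dni_nonneg (t : ℝ) : 0 ≤ distNearestInt t :=
  le_ciInf fun n => abs_nonneg _

lemma dni_le (t : ℝ) (n : ℤ) : distNearestInt t ≤ |t - n| :=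
  ciInf_le ⟨0, by rintro r ⟨m, rfl⟩; exact abs_nonneg _⟩ n

lemma dni_le_one (t : ℝ) : distNearestInt t ≤ 1 := by
  calc distNearestInt t ≤ |t - ⌊t⌋| := dni_le t ⌊t⌋
  _ = Int.fract t := abs_of_nonneg (Int.fract_nonneg t)
  _ ≤ 1 := (Int.fract_lt_one t).le

lemma dni_int_add (m : ℤ) (t : ℝ) : distNearestInt ((m : ℝ) + t) = distNearestInt t := by
  apply le_antisymm
  · apply le_ciInf; intro n
    calc distNearestInt ((m:ℝ)+t) ≤ |((m:ℝ)+t) - ((n+m : ℤ) : ℝ)| := dni_le _ _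
    _ = |t - n| := by push_cast; ring_nf
  · apply le_ciInf; intro n
    calc distNearestInt t ≤ |t - ((n - m:ℤ):ℝ)| := dni_le _ _
    _ = |((m:ℝ)+t) - n| := by push_cast; ring_nf

lemma dni_eq_min (y : ℝ) (h0 : 0 ≤ y) (h1 : y ≤ 1) : distNearestInt y = min y (1 - y) := by
  apply le_antisymm
  · refine le_min ?_ ?_
    · have := dni_le y 0
      rw [Int.cast_zero, sub_zero, abs_of_nonneg h0] at this
      exact this
    · calc distNearestInt y ≤ |y - (1:ℤ)| := dni_le y 1
      _ = 1 - y := by rw [abs_sub_comm, Int.cast_one]; exact abs_of_nonneg (by linarith)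
  · apply le_ciInf; intro n
    rcases le_or_gt (n:ℝ) 0 with h | h
    · calc min y (1-y) ≤ y := min_le_left _ _
      _ ≤ |y - n| := by rw [abs_of_nonneg (by linarith)]; linarith
    · have : (1:ℝ) ≤ n := by exact_mod_cast h
      calc min y (1-y) ≤ 1 - y := min_le_right _ _
      _ ≤ |y - n| := by rw [abs_sub_comm, abs_of_nonneg (by linarith)]; linarith

lemma summable_of_le_geom {g : ℕ → ℝ} {C : ℝ} (h0 : ∀ i, 0 ≤ g i)
    (h : ∀ i, g i ≤ C * (1/2)^i) : Summable g :=
  Summable.of_nonneg_of_le h0 h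
    ((summable_geometric_of_lt_one (by norm_num) (by norm_num)).mul_left C)

lemma geom_half_term (i c : ℕ) : (1:ℝ)/2^(i+c) = (1/2^c) * (1/2)^i := by
  rw [pow_add, div_pow, one_pow, one_div_mul_one_div, mul_comm ((2:ℝ)^i)]

section Expansion

variable {b : ℕ → ℕ}

lemma summable_digits (c : ℕ) (f : ℕ → ℕ) (hf : ∀ i, f i ≤ 1) :
    Summable (fun i : ℕ => (f i : ℝ)/2^(i+c)) := by
  refine summable_of_le_geom (fun i => by positivity) (fun i => ?_) (C := 1/2^c)
  rw [← geom_half_term]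
  gcongr
  exact_mod_cast hf i

/-- The tail value `0.b_n b_{n+1} …`. -/
noncomputable def tailVal (b : ℕ → ℕ) (n : ℕ) : ℝ := ∑' j, (b (n+j) : ℝ)/2^(j+1)

lemma tailVal_hasSum (hb : ∀ i, b i ≤ 1) (n : ℕ) : HasSum (fun j => (b (n+j) : ℝ)/2^(j+1)) (tailVal b n) :=
  (summable_digits 1 (fun j => b (n+j)) (fun j => hb _)).hasSum

lemma tailVal_nonneg (n : ℕ) : 0 ≤ tailVal b n :=
  tsum_nonneg (fun j => by positivity)

lemma hasSum_geom_shift (c : ℕ) : HasSum (fun j : ℕ => (1:ℝ)/2^(j+c)) (2/2^c) := by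
  have h := (hasSum_geometric_of_lt_one (r := (1/2:ℝ)) (by norm_num) (by norm_num)).mul_left
    ((1:ℝ)/2^c)
  have h2 : ((1:ℝ)/2^c) * (1-1/2)⁻¹ = 2/2^c := by
    rw [show ((1:ℝ)-1/2)⁻¹ = 2 by norm_num]
    ring
  rw [h2] at h
  exact h.congr_fun (fun i => geom_half_term i c)

lemma tailVal_le_one (hb : ∀ i, b i ≤ 1) (n : ℕ) : tailVal b n ≤ 1 := by
  have h2 : HasSum (fun j : ℕ => (1:ℝ)/2^(j+1)) 1 := by
    simpa using hasSum_geom_shift 1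
  refine hasSum_le (fun j => ?_) (tailVal_hasSum hb n) h2
  gcongr
  exact_mod_cast hb _

lemma tailVal_tail_hasSum (hb : ∀ i, b i ≤ 1) (n : ℕ) :
    HasSum (fun j => (b (n+1+j) : ℝ)/2^(j+2)) (tailVal b n - (b n : ℝ)/2) := by
  have h := (hasSum_nat_add_iff' (f := fun j => (b (n+j) : ℝ)/2^(j+1)) 1).2 (tailVal_hasSum hb n)
  simp only [Finset.range_one, Finset.sum_singleton] at h
  have he : (fun j => (b (n+1+j) : ℝ)/2^(j+2)) = fun j => (b (n+(j+1)) : ℝ)/2^((j+1)+1) := by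
    funext j
    rw [show n+(j+1) = n+1+j from by omega]
  rw [he]
  have e : tailVal b n - (b n : ℝ)/2 = tailVal b n - ↑(b (n + 0)) / 2 ^ (0 + 1) := by norm_num
  rw [e]; exact h

lemma dni_two_pow_mul (hb : ∀ i, b i ≤ 1) (x : ℝ) (hx : x = ∑' i, (b i : ℝ)/2^(i+1)) (n : ℕ) :
    distNearestInt (2^n * x) = distNearestInt (tailVal b n) := by
  have hs : Summable (fun i => (b i : ℝ)/2^(i+1)) := summable_digits 1 b hb
  have hsplit := hs.sum_add_tsum_nat_add n
  set P : ℝ := ∑ i ∈ Finset.range n, (b i : ℝ)/2^(i+1) with hP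
  have hxPT : x = P + ∑' i, (b (i+n) : ℝ)/2^(i+n+1) := by rw [hx, ← hsplit]
  have hT : (2:ℝ)^n * ∑' i, (b (i+n) : ℝ)/2^(i+n+1) = tailVal b n := by
    rw [← tsum_mul_left]
    refine tsum_congr fun j => ?_
    rw [show n + j = j + n from add_comm n j]
    rw [show j + n + 1 = (j+1) + n from by omega, pow_add]
    field_simp
  have hN : (2:ℝ)^n * P = ((∑ i ∈ Finset.range n, b i * 2^(n-1-i) : ℕ) : ℝ) := by
    rw [hP, Finset.mul_sum]
    push_cast
    refine Finset.sum_congr rfl fun i hi => ?_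
    have hi' : i < n := Finset.mem_range.1 hi
    have : (2:ℝ)^n = 2^(n-1-i) * 2^(i+1) := by
      rw [← pow_add]
      congr 1
      omega
    rw [this]
    field_simp
  calc distNearestInt (2^n * x)
      = distNearestInt (((∑ i ∈ Finset.range n, b i * 2^(n-1-i) : ℕ) : ℤ) + tailVal b n) := by
        rw [hxPT, mul_add, hT, hN]; norm_num
    _ = distNearestInt (tailVal b n) := dni_int_add _ _

/-- The core per-`n` expansion of one triangle-wave term. -/
lemma triangle_term_hasSum (hb : ∀ i, b i ≤ 1) (x : ℝ) (hx : x = ∑' i, (b i : ℝ)/2^(i+1)) (n : ℕ) :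
    HasSum (fun j => (if b (n+1+j) = b n then (0:ℝ) else 1)/2^(j+2))
      (distNearestInt (2^n * x)) := by
  rw [dni_two_pow_mul hb x hx n]
  have h0 : 0 ≤ tailVal b n := tailVal_nonneg n
  have h1 : tailVal b n ≤ 1 := tailVal_le_one hb n
  rw [dni_eq_min _ h0 h1]
  have htail := tailVal_tail_hasSum hb n
  rcases Nat.le_one_iff_eq_zero_or_eq_one.1 (hb n) with h | h
  · -- b n = 0 : value is tailVal itself, ≤ 1/2
    have hv : tailVal b n - (b n : ℝ)/2 = tailVal b n := by rw [h]; norm_num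
    rw [hv] at htail
    have hle : tailVal b n ≤ 1/2 := by
      have h2 : HasSum (fun j : ℕ => (1:ℝ)/2^(j+2)) (1/2) := by
        convert hasSum_geom_shift 2 using 1
        norm_num
      refine hasSum_le (fun j => ?_) htail h2
      gcongr
      exact_mod_cast hb _
    rw [min_eq_left (by linarith)]
    refine htail.congr_fun fun j => ?_
    rw [h]
    rcases Nat.le_one_iff_eq_zero_or_eq_one.1 (hb (n+1+j)) with h' | h' <;> simp [h']
  · -- b n = 1 : value is 1 - tailVal, tailVal ≥ 1/2
    have hge : 1/2 ≤ tailVal b n := by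
      have := htail.nonneg (fun j => by positivity)
      rw [h] at this
      norm_num at this
      linarith
    have h2 : HasSum (fun j : ℕ => (1:ℝ)/2^(j+2)) (1/2) := by
      convert hasSum_geom_shift 2 using 1
      norm_num
    have hsub := h2.sub htail
    have hval : 1/2 - (tailVal b n - (b n : ℝ)/2) = 1 - tailVal b n := by rw [h]; push_cast; ring
    rw [hval] at hsub
    rw [min_eq_right (by linarith)]
    refine hsub.congr_fun fun j => ?_
    rw [h]
    rcases Nat.le_one_iff_eq_zero_or_eq_one.1 (hb (n+1+j)) with h' | h' <;>
      simp [h'] <;> ring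

end Expansion

section Interchange

variable {b : ℕ → ℕ}

/-- `cnt b i` = number of earlier digits different from digit `i`. -/
def cnt (b : ℕ → ℕ) (i : ℕ) : ℕ := ∑ k ∈ Finset.range i, (if b i = b k then 0 else 1)

noncomputable def gfun (b : ℕ → ℕ) (n i : ℕ) : ℝ :=
  if n < i then (if b i = b n then (0:ℝ) else 1)/2^(i+1) else 0

lemma gfun_nonneg (n i : ℕ) : 0 ≤ gfun b n i := by
  unfold gfun
  rcases lt_or_ge n i with h|h
  · rw [if_pos h]
    split <;> positivity
  · rw [if_neg (not_lt.2 h)]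

lemma gfun_hasSum (hb : ∀ i, b i ≤ 1) (x : ℝ) (hx : x = ∑' i, (b i : ℝ)/2^(i+1)) (n : ℕ) :
    HasSum (gfun b n) (distNearestInt (2^n * x)/2^n) := by
  have h := (triangle_term_hasSum hb x hx n).div_const (2^n)
  have hinj : Function.Injective (fun j : ℕ => n+1+j) := fun a₁ a₂ h => by
    dsimp at h
    omega
  refine (Function.Injective.hasSum_iff hinj ?_).1 ?_
  · intro i hi
    have : ¬ n < i := by
      simp only [Set.mem_range] at hi
      push_neg at hi
      by_contra hlt
      exact absurd (hi (i - (n+1))) (by omega)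
    simp [gfun, this]
  · refine h.congr_fun fun j => ?_
    simp only [Function.comp_apply, gfun, if_pos (show n < n+1+j by omega)]
    rw [div_div, ← pow_add]
    congr 2
    omega

lemma summable_gfun_uncurry (hb : ∀ i, b i ≤ 1) (x : ℝ)
    (hx : x = ∑' i, (b i : ℝ)/2^(i+1)) :
    Summable (fun p : ℕ × ℕ => gfun b p.1 p.2) := by
  refine (summable_prod_of_nonneg (fun p => gfun_nonneg _ _)).2 ⟨fun n => (gfun_hasSum hb x hx n).summable, ?_⟩
  have he : ∀ n : ℕ, ∑' i, gfun b n i = distNearestInt (2^n * x)/2^n :=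
    fun n => (gfun_hasSum hb x hx n).tsum_eq
  rw [show (fun n => ∑' i, gfun b n i) = fun n => distNearestInt (2^n * x)/2^n from funext he]
  refine summable_of_le_geom (fun n => div_nonneg (dni_nonneg _) (by positivity)) (fun n => ?_) (C := 1)
  rw [one_mul]
  calc distNearestInt (2^n * x)/2^n ≤ 1/2^n := by
        apply div_le_div_of_nonneg_right (dni_le_one _)
        positivity
  _ = (1/2:ℝ)^n := by rw [div_pow]; norm_num

set_option maxHeartbeats 1000000 in
lemma takagi_eq_cnt_sum (hb : ∀ i, b i ≤ 1) (x : ℝ) (hx : x = ∑' i, (b i : ℝ)/2^(i+1)) :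
    takagi x = ∑' i, (cnt b i : ℝ)/2^(i+1) := by
  have hcol : ∀ i, Summable (fun n => gfun b n i) := by
    intro i
    apply summable_of_ne_finset_zero (s := Finset.range i)
    intro n hn
    simp only [Finset.mem_range, not_lt] at hn
    simp [gfun, show ¬ n < i by omega]
  have h1 : takagi x = ∑' n, ∑' i, gfun b n i := by
    unfold takagi
    exact tsum_congr fun n => ((gfun_hasSum hb x hx n).tsum_eq).symm
  have h2 := Summable.tsum_comm' (f := gfun b) (summable_gfun_uncurry hb x hx)
    (fun n => (gfun_hasSum hb x hx n).summable) hcol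
  rw [h1, ← h2]
  refine tsum_congr fun i => ?_
  rw [tsum_eq_sum (s := Finset.range i) (fun n hn => by
    simp only [Finset.mem_range, not_lt] at hn
    simp [gfun, show ¬ n < i by omega])]
  unfold gfun cnt
  push_cast
  rw [Finset.sum_div]
  refine Finset.sum_congr rfl fun n hn => ?_
  rw [if_pos (Finset.mem_range.1 hn)]

end Interchange

section Formula

variable {b : ℕ → ℕ}

lemma defD_succ (i : ℕ) : defD b (i+1) = defD b i + 1 - 2 * (b i : ℤ) := by
  unfold defD
  rw [Finset.sum_range_succ]
  push_cast
  ring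

lemma defD_abs_le (i : ℕ) (hb : ∀ k, b k ≤ 1) : |defD b i| ≤ i := by
  unfold defD
  rw [abs_le]
  constructor
  · have h : ∑ k ∈ Finset.range i, (b k : ℤ) ≤ ∑ k ∈ Finset.range i, 1 :=
      Finset.sum_le_sum fun k _ => by exact_mod_cast hb k
    simp only [Finset.sum_const, Finset.card_range, nsmul_eq_mul, mul_one] at h
    omega
  · have h : (0:ℤ) ≤ ∑ k ∈ Finset.range i, (b k : ℤ) :=
      Finset.sum_nonneg fun k _ => by positivity
    omega

lemma cnt_identity (hb : ∀ k, b k ≤ 1) (i : ℕ) :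
    (2 * cnt b i : ℤ) = i + (2 * (b i : ℤ) - 1) * defD b i := by
  have hcast : (cnt b i : ℤ) = ∑ k ∈ Finset.range i, (if b i = b k then (0:ℤ) else 1) := by
    unfold cnt
    push_cast [apply_ite (fun n : ℕ => (n : ℤ))]
    rfl
  rcases Nat.le_one_iff_eq_zero_or_eq_one.1 (hb i) with h | h
  · have hsum : ∑ k ∈ Finset.range i, (if b i = b k then (0:ℤ) else 1)
        = ∑ k ∈ Finset.range i, (b k : ℤ) := by
      refine Finset.sum_congr rfl fun k _ => ?_
      rcases Nat.le_one_iff_eq_zero_or_eq_one.1 (hb k) with h' | h' <;> simp [h, h']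
    rw [hcast, hsum] at *
    unfold defD
    rw [h]
    push_cast
    ring
  · have hsum : ∑ k ∈ Finset.range i, (if b i = b k then (0:ℤ) else 1)
        = ∑ k ∈ Finset.range i, (1 - (b k : ℤ)) := by
      refine Finset.sum_congr rfl fun k _ => ?_
      rcases Nat.le_one_iff_eq_zero_or_eq_one.1 (hb k) with h' | h' <;> simp [h, h']
    rw [hcast, hsum]
    rw [Finset.sum_sub_distrib]
    simp only [Finset.sum_const, Finset.card_range, smul_eq_mul, mul_one]
    unfold defD
    rw [h]
    push_cast
    ring

/-- Telescoping auxiliary function. -/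
noncomputable def Ftel (b : ℕ → ℕ) (i : ℕ) : ℝ := (4*i + 6 + 2*((defD b i : ℝ))^2)/2^(i+3)

lemma Ftel_nonneg (i : ℕ) : 0 ≤ Ftel b i := by
  unfold Ftel
  positivity

lemma key_identity (hb : ∀ k, b k ≤ 1) (i : ℕ) :
    (cnt b i : ℝ)/2^(i+1) + ((defD b i : ℝ))^2/2^(i+3) = Ftel b i - Ftel b (i+1) := by
  have hβ : ((b i : ℝ))^2 = (b i : ℝ) := by
    rcases Nat.le_one_iff_eq_zero_or_eq_one.1 (hb i) with h | h <;> rw [h] <;> norm_num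
  have hD' : ((defD b (i+1) : ℝ)) = (defD b i : ℝ) + 1 - 2*(b i : ℝ) := by
    rw [defD_succ]
    push_cast
    ring
  have hc : 2*(cnt b i : ℝ) = i + (2*(b i : ℝ)-1)*(defD b i : ℝ) := by
    exact_mod_cast congrArg (fun z : ℤ => (z : ℝ)) (cnt_identity hb i)
  unfold Ftel
  rw [hD']
  push_cast
  have h1 : (2:ℝ)^(i+1) ≠ 0 := by positivity
  have h3 : (2:ℝ)^(i+3) ≠ 0 := by positivity
  have hpow : (2:ℝ)^(i+3) = 4*2^(i+1) := by rw [pow_add, pow_add]; ring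
  field_simp
  ring_nf
  linear_combination (64*(2:ℝ)^(i*2))*hc + (128*(2:ℝ)^(i*2))*hβ

end Formula

section Formula2

variable {b : ℕ → ℕ}

lemma half_norm_lt_one : ‖(1/2 : ℝ)‖ < 1 := by
  rw [Real.norm_eq_abs, abs_of_nonneg] <;> norm_num

lemma summable_sq_geom : Summable (fun i : ℕ => ((i:ℝ)^2) * (1/2)^i) :=
  summable_pow_mul_geometric_of_norm_lt_one 2 half_norm_lt_one

lemma defD_sq_le (hb : ∀ k, b k ≤ 1) (i : ℕ) : ((defD b i : ℝ))^2 ≤ (i:ℝ)^2 := by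
  have h := defD_abs_le i hb
  have h' : |(defD b i : ℝ)| ≤ (i:ℝ) := by exact_mod_cast h
  have h2 := abs_le.1 h'
  nlinarith [h2.1, h2.2]

lemma div_pow_le_div_pow (a : ℝ) (ha : 0 ≤ a) (i c : ℕ) : a/2^(i+c) ≤ a/2^i := by
  rcases eq_or_lt_of_le ha with h|h
  · rw [← h]
    simp
  · exact div_le_div_of_nonneg_left ha (by positivity) (by
      apply pow_le_pow_right₀ (by norm_num)
      omega)

lemma summable_vD (hb : ∀ k, b k ≤ 1) :
    Summable (fun i : ℕ => ((defD b i : ℝ))^2/2^(i+3)) := by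
  refine Summable.of_nonneg_of_le (fun i => by positivity) (fun i => ?_) summable_sq_geom
  calc ((defD b i : ℝ))^2/2^(i+3) ≤ (i:ℝ)^2/2^(i+3) :=
        div_le_div_of_nonneg_right (defD_sq_le hb i) (by positivity)
  _ ≤ (i:ℝ)^2/2^i := div_pow_le_div_pow _ (by positivity) i 3
  _ = (i:ℝ)^2 * (1/2)^i := by rw [div_pow, one_pow]; ring

lemma Ftel_tendsto_zero (hb : ∀ k, b k ≤ 1) :
    Filter.Tendsto (Ftel b) Filter.atTop (nhds 0) := by
  have ha : Summable (fun i : ℕ => (4:ℝ)*((i:ℝ)*(1/2)^i)) :=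
    ((summable_pow_mul_geometric_of_norm_lt_one 1 half_norm_lt_one).congr
      (fun i => by rw [pow_one])).mul_left 4
  have hb6 : Summable (fun i : ℕ => (6:ℝ)*(1/2)^i) :=
    (summable_geometric_of_lt_one (by norm_num) (by norm_num)).mul_left 6
  have hc2 : Summable (fun i : ℕ => (2:ℝ)*((i:ℝ)^2*(1/2)^i)) := summable_sq_geom.mul_left 2
  have h1 : Summable (fun i : ℕ => ((4*(i:ℝ) + 6 + 2*(i:ℝ)^2))*(1/2)^i) :=
    ((ha.add hb6).add hc2).congr (fun i => by ring)
  have hsum : Summable (Ftel b) := by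
    refine Summable.of_nonneg_of_le (fun i => Ftel_nonneg i) (fun i => ?_) h1
    unfold Ftel
    calc (4*i + 6 + 2*((defD b i : ℝ))^2)/2^(i+3) ≤ (4*i + 6 + 2*(i:ℝ)^2)/2^(i+3) := by
          apply div_le_div_of_nonneg_right _ (by positivity)
          have := defD_sq_le hb i
          linarith
    _ ≤ (4*i + 6 + 2*(i:ℝ)^2)/2^i := div_pow_le_div_pow _ (by positivity) i 3
    _ = (4*(i:ℝ) + 6 + 2*(i:ℝ)^2)*(1/2)^i := by rw [div_pow, one_pow]; ring
  exact hsum.tendsto_atTop_zero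

lemma hasSum_combined (hb : ∀ k, b k ≤ 1) :
    HasSum (fun i => (cnt b i : ℝ)/2^(i+1) + ((defD b i : ℝ))^2/2^(i+3)) (3/4) := by
  set f := fun i => (cnt b i : ℝ)/2^(i+1) + ((defD b i : ℝ))^2/2^(i+3) with hf
  have hpart : ∀ N, ∑ i ∈ Finset.range N, f i = Ftel b 0 - Ftel b N := by
    intro N
    rw [show ∑ i ∈ Finset.range N, f i = ∑ i ∈ Finset.range N, (Ftel b i - Ftel b (i+1)) from
      Finset.sum_congr rfl fun i _ => key_identity hb i]
    exact Finset.sum_range_sub' (Ftel b) N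
  have hnn : ∀ i, 0 ≤ f i := fun i => by
    rw [hf]
    positivity
  have hsumf : Summable f := summable_of_sum_range_le hnn (fun N => by
    rw [hpart N]
    have := Ftel_nonneg (b := b) N
    linarith)
  have hF0 : Ftel b 0 = 3/4 := by
    unfold Ftel defD
    norm_num
  have htend : Filter.Tendsto (fun N => ∑ i ∈ Finset.range N, f i) Filter.atTop (nhds (3/4)) := by
    rw [show (fun N => ∑ i ∈ Finset.range N, f i) = fun N => Ftel b 0 - Ftel b N from
      funext hpart]
    rw [show (3:ℝ)/4 = Ftel b 0 - 0 from by rw [hF0]; ring]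
    exact (tendsto_const_nhds).sub (Ftel_tendsto_zero hb)
  have hts := hsumf.hasSum.tendsto_sum_nat
  have heq : ∑' i, f i = 3/4 := tendsto_nhds_unique hts htend
  rw [← heq]
  exact hsumf.hasSum

/-- The closed formula for the Takagi function in terms of deficient digit counts. -/
theorem takagi_formula (hb : ∀ k, b k ≤ 1) (x : ℝ) (hx : x = ∑' i, (b i : ℝ)/2^(i+1)) :
    takagi x = 3/4 - ∑' i, ((defD b i : ℝ))^2/2^(i+3) := by
  have hv := summable_vD hb
  have hcomb := hasSum_combined hb
  have hu : HasSum (fun i => (cnt b i : ℝ)/2^(i+1)) (3/4 - ∑' i, ((defD b i : ℝ))^2/2^(i+3)) := by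
    have hs := hcomb.sub hv.hasSum
    exact hs.congr_fun (fun i => by ring)
  rw [takagi_eq_cnt_sum hb x hx]
  exact hu.tsum_eq

end Formula2

section Walk

lemma summable_poly_geom (A B C : ℝ) :
    Summable (fun k : ℕ => (A + B*k + C*(k:ℝ)^2)/2^k) := by
  have ha : Summable (fun k : ℕ => A*(1/2:ℝ)^k) :=
    (summable_geometric_of_lt_one (by norm_num) (by norm_num)).mul_left A
  have hbs : Summable (fun k : ℕ => B*((k:ℝ)*(1/2)^k)) :=
    ((summable_pow_mul_geometric_of_norm_lt_one 1 half_norm_lt_one).congr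
      (fun i => by rw [pow_one])).mul_left B
  have hc : Summable (fun k : ℕ => C*((k:ℝ)^2*(1/2)^k)) := summable_sq_geom.mul_left C
  refine ((ha.add hbs).add hc).congr (fun k => ?_)
  have hp : ((1:ℝ)/2)^k = 1/2^k := by rw [div_pow, one_pow]
  rw [hp]
  ring

lemma sq_eq_one_cases (d : ℤ) (h : d^2 = 1) : d = 1 ∨ d = -1 := by
  have h1 : d ≤ 1 := by nlinarith
  have h2 : -1 ≤ d := by nlinarith
  interval_cases d
  · right; rfl
  · exfalso; norm_num at h
  · left; rfl

variable {w : ℕ → ℤ}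

lemma walk_le (hstep : ∀ k, (w (k+1) - w k)^2 = 1) : ∀ k, w k ≤ w 0 + k := by
  intro k
  induction k with
  | zero => simp
  | succ n ih =>
    have h := sq_eq_one_cases _ (hstep n)
    push_cast
    rcases h with h'|h' <;> omega

lemma walk_sq_le (hpos : ∀ k, 1 ≤ w k) (hstep : ∀ k, (w (k+1) - w k)^2 = 1) (k : ℕ) :
    ((w k : ℝ))^2 ≤ ((w 0 : ℝ) + k)^2 := by
  have h1 : (1:ℝ) ≤ (w k : ℝ) := by exact_mod_cast hpos k
  have h2 : (w k : ℝ) ≤ (w 0 : ℝ) + k := by exact_mod_cast walk_le hstep k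
  nlinarith

lemma walk_summable (hpos : ∀ k, 1 ≤ w k) (hstep : ∀ k, (w (k+1) - w k)^2 = 1) :
    Summable (fun k : ℕ => ((w k : ℝ))^2/2^k) := by
  refine Summable.of_nonneg_of_le (fun k => by positivity) (fun k => ?_)
    (summable_poly_geom ((w 0:ℝ)^2) (2*(w 0:ℝ)) 1)
  have h := walk_sq_le hpos hstep k
  have he : ((w 0:ℝ)+k)^2 = (w 0:ℝ)^2 + 2*(w 0:ℝ)*k + 1*(k:ℝ)^2 := by ring
  apply div_le_div_of_nonneg_right _ (by positivity)
  rw [← he]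
  exact h

/-- Upper bound for the weighted square-sum of a walk staying `≥ 1`. -/
lemma walk_sum_le (hpos : ∀ k, 1 ≤ w k) (hstep : ∀ k, (w (k+1) - w k)^2 = 1) :
    ∑' k, ((w k : ℝ))^2/2^k ≤ 2*((w 0 : ℝ))^2 + 4*(w 0 : ℝ) + 6 := by
  set Phi : ℕ → ℝ := fun k => (2*((w k : ℝ))^2 + 4*(w k : ℝ) + 6)/2^k with hPhi
  have hPhinn : ∀ k, 0 ≤ Phi k := by
    intro k
    have h1 : (1:ℝ) ≤ (w k : ℝ) := by exact_mod_cast hpos k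
    have hd : (0:ℝ) < 2^k := by positivity
    apply div_nonneg _ hd.le
    nlinarith
  have hstepI : ∀ k, 2*(w (k+1))^2 + 4*(w (k+1)) + 6 ≤ 2*(w k)^2 + 8*(w k) + 12 := by
    intro k
    have h := sq_eq_one_cases _ (hstep k)
    have hp := hpos k
    rcases h with h'|h' <;> nlinarith
  have hkey : ∀ k, ((w k : ℝ))^2/2^k ≤ Phi k - Phi (k+1) := by
    intro k
    have e1 : Phi k - Phi (k+1) =
        (2*(2*((w k : ℝ))^2 + 4*(w k : ℝ) + 6) - (2*((w (k+1) : ℝ))^2 + 4*(w (k+1) : ℝ) + 6))/2^(k+1) := by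
      rw [hPhi]
      rw [pow_succ]
      field_simp
      ring
    have e2 : ((w k : ℝ))^2/2^k = (2*((w k : ℝ))^2)/2^(k+1) := by
      rw [pow_succ]
      field_simp
      ring
    rw [e1, e2]
    apply div_le_div_of_nonneg_right _ (by positivity)
    have hI := hstepI k
    have hIr : 2*((w (k+1):ℝ))^2 + 4*((w (k+1):ℝ)) + 6 ≤ 2*((w k:ℝ))^2 + 8*((w k:ℝ)) + 12 := by
      exact_mod_cast hI
    linarith
  have hparts : ∀ N, ∑ k ∈ Finset.range N, ((w k : ℝ))^2/2^k ≤ Phi 0 - Phi N := by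
    intro N
    induction N with
    | zero => simp
    | succ n ih =>
      rw [Finset.sum_range_succ]
      have := hkey n
      linarith
  have hbound : ∀ N, ∑ k ∈ Finset.range N, ((w k : ℝ))^2/2^k ≤ Phi 0 := by
    intro N
    have := hparts N
    have := hPhinn N
    linarith
  have h0 : Phi 0 = 2*((w 0 : ℝ))^2 + 4*(w 0 : ℝ) + 6 := by
    rw [hPhi]
    norm_num
  rw [← h0]
  exact (walk_summable hpos hstep).tsum_le_of_sum_range_le hbound

/-- Lower bound for the weighted square-sum of a walk staying `≥ 1`. -/
lemma walk_sum_ge (hpos : ∀ k, 1 ≤ w k) (hstep : ∀ k, (w (k+1) - w k)^2 = 1) :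
    2*((w 0 : ℝ))^2 - 4*(w 0 : ℝ) + 6 ≤ ∑' k, ((w k : ℝ))^2/2^k := by
  set Psi : ℕ → ℝ := fun k => (2*((w k : ℝ))^2 - 4*(w k : ℝ) + 6)/2^k with hPsi
  have hPsinn : ∀ k, 0 ≤ Psi k := by
    intro k
    have hd : (0:ℝ) < 2^k := by positivity
    apply div_nonneg _ hd.le
    nlinarith [sq_nonneg ((w k : ℝ) - 1)]
  have hstepI : ∀ k, 2*(w k)^2 - 8*(w k) + 12 ≤ 2*(w (k+1))^2 - 4*(w (k+1)) + 6 := by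
    intro k
    have h := sq_eq_one_cases _ (hstep k)
    have hp := hpos k
    rcases h with h'|h' <;> nlinarith
  have hkey : ∀ k, Psi k - Psi (k+1) ≤ ((w k : ℝ))^2/2^k := by
    intro k
    have e1 : Psi k - Psi (k+1) =
        (2*(2*((w k : ℝ))^2 - 4*(w k : ℝ) + 6) - (2*((w (k+1) : ℝ))^2 - 4*(w (k+1) : ℝ) + 6))/2^(k+1) := by
      rw [hPsi]
      rw [pow_succ]
      field_simp
      ring
    have e2 : ((w k : ℝ))^2/2^k = (2*((w k : ℝ))^2)/2^(k+1) := by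
      rw [pow_succ]
      field_simp
      ring
    rw [e1, e2]
    apply div_le_div_of_nonneg_right _ (by positivity)
    have hI := hstepI k
    have hIr : 2*((w k:ℝ))^2 - 8*((w k:ℝ)) + 12 ≤ 2*((w (k+1):ℝ))^2 - 4*((w (k+1):ℝ)) + 6 := by
      exact_mod_cast hI
    linarith
  have hparts : ∀ N, Psi 0 - Psi N ≤ ∑ k ∈ Finset.range N, ((w k : ℝ))^2/2^k := by
    intro N
    induction N with
    | zero => simp
    | succ n ih =>
      rw [Finset.sum_range_succ]
      have := hkey n
      linarith
  have hsum := walk_summable hpos hstep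
  have htail : ∀ N, Psi 0 - Psi N ≤ ∑' k, ((w k : ℝ))^2/2^k := by
    intro N
    calc Psi 0 - Psi N ≤ ∑ k ∈ Finset.range N, ((w k : ℝ))^2/2^k := hparts N
    _ ≤ ∑' k, ((w k : ℝ))^2/2^k := Summable.sum_le_tsum _ (fun k _ => by positivity) hsum
  have hPsiTend : Filter.Tendsto Psi Filter.atTop (nhds 0) := by
    have hle : ∀ k, Psi k ≤ ((2*(w 0:ℝ)^2+6) + 4*(w 0:ℝ)*k + 2*(k:ℝ)^2)/2^k := by
      intro k
      rw [hPsi]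
      apply div_le_div_of_nonneg_right _ (by positivity)
      have h := walk_sq_le hpos hstep k
      have h1 : (1:ℝ) ≤ (w k : ℝ) := by exact_mod_cast hpos k
      nlinarith
    exact squeeze_zero hPsinn hle
      (summable_poly_geom (2*(w 0:ℝ)^2+6) (4*(w 0:ℝ)) 2).tendsto_atTop_zero
  have hlim : Filter.Tendsto (fun N => Psi 0 - Psi N) Filter.atTop (nhds (Psi 0)) := by
    rw [show nhds (Psi 0) = nhds (Psi 0 - 0) from by rw [sub_zero]]
    exact tendsto_const_nhds.sub hPsiTend
  have hfin : Psi 0 ≤ ∑' k, ((w k : ℝ))^2/2^k := le_of_tendsto' hlim htail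
  have h0 : Psi 0 = 2*((w 0 : ℝ))^2 - 4*(w 0 : ℝ) + 6 := by
    rw [hPsi]
    norm_num
  rw [← h0]
  exact hfin

end Walk

section Main

lemma val_le_of_digits (b b' : ℕ → ℕ) (hb : ∀ i, b i ≤ 1) (hb' : ∀ i, b' i ≤ 1)
    (m : ℕ) (hag : ∀ i < m, b i = b' i) (h0 : b m = 0) (h1 : b' m = 1) :
    (∑' i, (b i : ℝ)/2^(i+1)) ≤ ∑' i, (b' i : ℝ)/2^(i+1) := by
  have hsb := summable_digits 1 b hb
  have hsb' := summable_digits 1 b' hb'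
  have hsplit := hsb.sum_add_tsum_nat_add (m+1)
  have hsplit' := hsb'.sum_add_tsum_nat_add (m+1)
  have hg : HasSum (fun j : ℕ => (1:ℝ)/2^(j+(m+2))) (2/2^(m+2)) := hasSum_geom_shift (m+2)
  have htail : (∑' j, (b (j+(m+1)) : ℝ)/2^((j+(m+1))+1)) ≤ 1/2^(m+1) := by
    have hle : ∀ j : ℕ, (b (j+(m+1)) : ℝ)/2^((j+(m+1))+1) ≤ (1:ℝ)/2^(j+(m+2)) := by
      intro j
      rw [show (j+(m+1))+1 = j+(m+2) from by omega]
      apply div_le_div_of_nonneg_right _ (by positivity)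
      exact_mod_cast hb _
    calc (∑' j, (b (j+(m+1)) : ℝ)/2^((j+(m+1))+1)) ≤ ∑' j : ℕ, (1:ℝ)/2^(j+(m+2)) :=
          Summable.tsum_le_tsum hle (hsb.comp_injective (fun a₁ a₂ h => by omega)) hg.summable
    _ = 2/2^(m+2) := hg.tsum_eq
    _ = 1/2^(m+1) := by rw [pow_succ]; field_simp
  have htail' : (0:ℝ) ≤ ∑' j, (b' (j+(m+1)) : ℝ)/2^((j+(m+1))+1) :=
    tsum_nonneg (fun j => by positivity)
  have hhead : ∑ i ∈ Finset.range (m+1), (b i : ℝ)/2^(i+1)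
      = ∑ i ∈ Finset.range m, (b i : ℝ)/2^(i+1) := by
    rw [Finset.sum_range_succ, h0]
    norm_num
  have hhead' : ∑ i ∈ Finset.range (m+1), (b' i : ℝ)/2^(i+1)
      = ∑ i ∈ Finset.range m, (b i : ℝ)/2^(i+1) + 1/2^(m+1) := by
    have hsc : ∑ i ∈ Finset.range m, (b' i : ℝ)/2^(i+1)
        = ∑ i ∈ Finset.range m, (b i : ℝ)/2^(i+1) :=
      Finset.sum_congr rfl fun i hi => by rw [hag i (Finset.mem_range.1 hi)]
    rw [Finset.sum_range_succ, h1, hsc]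
    norm_num
  rw [← hsplit, ← hsplit', hhead, hhead']
  linarith

lemma main_case (x x' : ℝ) (b b' : ℕ → ℕ)
    (hb1 : ∀ i, b i ≤ 1) (hb'1 : ∀ i, b' i ≤ 1)
    (hbx : x = ∑' i, (b i : ℝ)/2^(i+1)) (hb'x : x' = ∑' i, (b' i : ℝ)/2^(i+1))
    (hbD : ∀ j ≥ 1, 0 < defD b j) (hb'D : ∀ j ≥ 1, 0 < defD b' j)
    (m : ℕ) (hm1 : 1 ≤ m) (hmlt : ∀ i < m, b i = b' i)
    (hbm : b m = 0) (hb'm : b' m = 1) :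
    takagi x ≤ takagi x' := by
  -- head equality of defD
  have hDeq : ∀ j ≤ m, defD b j = defD b' j := by
    intro j hj
    unfold defD
    congr 1
    congr 1
    exact Finset.sum_congr rfl fun i hi => by
      rw [hmlt i (lt_of_lt_of_le (Finset.mem_range.1 hi) hj)]
  set d := defD b m with hddef
  have hd1 : 1 ≤ d := hbD m hm1
  have hDm1 : defD b (m+1) = d + 1 := by
    rw [defD_succ, hbm]
    push_cast
    ring
  have hD'm1 : defD b' (m+1) = d - 1 := by
    rw [defD_succ, hb'm, ← hDeq m (le_refl m)]
    push_cast
    ring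
  have hd2 : 2 ≤ d := by
    have h := hb'D (m+1) (by omega)
    omega
  -- walks
  set w : ℕ → ℤ := fun k => defD b (k+(m+1)) with hwdef
  set w' : ℕ → ℤ := fun k => defD b' (k+(m+1)) with hw'def
  have hwpos : ∀ k, 1 ≤ w k := fun k => hbD (k+(m+1)) (by omega)
  have hw'pos : ∀ k, 1 ≤ w' k := fun k => hb'D (k+(m+1)) (by omega)
  have hwstep : ∀ k, (w (k+1) - w k)^2 = 1 := by
    intro k
    have he : (k+1)+(m+1) = (k+(m+1))+1 := by omega
    rw [hwdef]
    simp only []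
    rw [he, defD_succ]
    rcases Nat.le_one_iff_eq_zero_or_eq_one.1 (hb1 (k+(m+1))) with h | h <;> rw [h] <;> push_cast <;> ring_nf
  have hw'step : ∀ k, (w' (k+1) - w' k)^2 = 1 := by
    intro k
    have he : (k+1)+(m+1) = (k+(m+1))+1 := by omega
    rw [hw'def]
    simp only []
    rw [he, defD_succ]
    rcases Nat.le_one_iff_eq_zero_or_eq_one.1 (hb'1 (k+(m+1))) with h | h <;> rw [h] <;> push_cast <;> ring_nf
  have hw0 : w 0 = d + 1 := by
    rw [hwdef]
    simp only [Nat.zero_add]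
    exact hDm1
  have hw'0 : w' 0 = d - 1 := by
    rw [hw'def]
    simp only [Nat.zero_add]
    exact hD'm1
  -- tail rewriting
  have htailrw : ∀ (c : ℕ → ℕ) (v : ℕ → ℤ), (∀ k, v k = defD c (k+(m+1))) →
      (∑' k, ((defD c (k+(m+1)) : ℝ))^2/2^((k+(m+1))+3))
        = (1/2^(m+4)) * ∑' k, ((v k : ℝ))^2/2^k := by
    intro c v hv
    rw [← tsum_mul_left]
    refine tsum_congr fun k => ?_
    rw [hv k, show (k+(m+1))+3 = (m+4)+k from by omega, pow_add]
    ring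
  have hsv := summable_vD hb1
  have hsv' := summable_vD hb'1
  have hsp := hsv.sum_add_tsum_nat_add (m+1)
  have hsp' := hsv'.sum_add_tsum_nat_add (m+1)
  have hheads : ∑ i ∈ Finset.range (m+1), ((defD b i : ℝ))^2/2^(i+3)
      = ∑ i ∈ Finset.range (m+1), ((defD b' i : ℝ))^2/2^(i+3) := by
    refine Finset.sum_congr rfl fun i hi => ?_
    have hi' := Finset.mem_range.1 hi
    rw [hDeq i (by omega)]
  have htw := htailrw b w (fun k => rfl)
  have htw' := htailrw b' w' (fun k => rfl)
  -- walk bounds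
  have hub := walk_sum_le hw'pos hw'step
  have hlb := walk_sum_ge hwpos hwstep
  rw [hw'0] at hub
  rw [hw0] at hlb
  have hbridge : 2*(((d:ℝ)) - 1)^2 + 4*((d:ℝ) - 1) + 6 = 2*((d:ℝ) + 1)^2 - 4*((d:ℝ) + 1) + 6 := by
    ring
  have hcast' : ((d - 1 : ℤ) : ℝ) = (d:ℝ) - 1 := by push_cast; ring
  have hcast : ((d + 1 : ℤ) : ℝ) = (d:ℝ) + 1 := by push_cast; ring
  rw [hcast'] at hub
  rw [hcast] at hlb
  have hwalks : ∑' k, ((w' k : ℝ))^2/2^k ≤ ∑' k, ((w k : ℝ))^2/2^k := by linarith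
  have htails : (∑' k, ((defD b' (k+(m+1)) : ℝ))^2/2^((k+(m+1))+3))
      ≤ ∑' k, ((defD b (k+(m+1)) : ℝ))^2/2^((k+(m+1))+3) := by
    rw [htw, htw']
    apply mul_le_mul_of_nonneg_left hwalks (by positivity)
  -- conclude
  rw [takagi_formula hb1 x hbx, takagi_formula hb'1 x' hb'x]
  have hgoal : ∑' i, ((defD b' i : ℝ))^2/2^(i+3) ≤ ∑' i, ((defD b i : ℝ))^2/2^(i+3) := by
    rw [← hsp, ← hsp', hheads]
    linarith
  linarith


theorem takagi_mono_on_halfOmegaL_aux (x x' : ℝ) (hx : x ∈ halfOmegaL) (hx' : x' ∈ halfOmegaL)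
    (hle : x ≤ x') : takagi x ≤ takagi x' := by
  obtain ⟨b, ⟨hb1, hbx⟩, hbD⟩ := hx
  obtain ⟨b', ⟨hb'1, hb'x⟩, hb'D⟩ := hx'
  rcases eq_or_lt_of_le hle with heq | hlt
  · rw [heq]
  have hbb : b ≠ b' := by
    rintro rfl
    rw [hbx, ← hb'x] at hlt
    exact lt_irrefl _ hlt
  have hex : ∃ i, b i ≠ b' i := by
    by_contra h
    push_neg at h
    exact hbb (funext h)
  set m := Nat.find hex with hmdef
  have hm : b m ≠ b' m := Nat.find_spec hex
  have hmlt : ∀ i < m, b i = b' i := fun i hi => not_not.1 (Nat.find_min hex hi)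
  have hb0 : b 0 = 0 := by
    have h := hbD 1 (le_refl 1)
    unfold defD at h
    rw [Finset.sum_range_one] at h
    omega
  have hb'0 : b' 0 = 0 := by
    have h := hb'D 1 (le_refl 1)
    unfold defD at h
    rw [Finset.sum_range_one] at h
    omega
  have hm1 : 1 ≤ m := by
    rcases Nat.eq_zero_or_pos m with h | h
    · exfalso
      apply hm
      rw [h, hb0, hb'0]
    · exact h
  rcases Nat.le_one_iff_eq_zero_or_eq_one.1 (hb1 m) with hbm | hbm <;>
    rcases Nat.le_one_iff_eq_zero_or_eq_one.1 (hb'1 m) with hb'm | hb'm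
  · exact absurd (hbm.trans hb'm.symm) hm
  · exact main_case x x' b b' hb1 hb'1 hbx hb'x hbD hb'D m hm1 hmlt hbm hb'm
  · exfalso
    have hord := val_le_of_digits b' b hb'1 hb1 m (fun i hi => (hmlt i hi).symm) hb'm hbm
    rw [← hbx, ← hb'x] at hord
    linarith
  · exact absurd (hbm.trans hb'm.symm) hm

end Main

theorem takagi_mono_on_halfOmegaL (x x' : ℝ) (hx : x ∈ halfOmegaL) (hx' : x' ∈ halfOmegaL)
    (hle : x ≤ x') : takagi x ≤ takagi x' :=
  takagi_mono_on_halfOmegaL_aux x x' hx hx' hle
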